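/- For every monic real polynomial p of degree m, there exists a monic real polynomial q of degree m such that [p ⊞_m q](x) = x^m. -/

import Mathlib

open Polynomial

/-!
The derivatives `p, p', …, p^(m)` of a polynomial of degree `m` have degrees `m, m - 1, …, 0`,
so they span the polynomials of degree `≤ m`: `m! X^m = ∑ cᵢ p^(m-i)`, and comparing leading
coefficients gives `c_m = m!` when `p` is monic. By Taylor's formula there is a `q` of degree
`≤ m` with `q^(k)(0) = c_k` for all `k ≤ m`; then `p ⊞_m q = X^m`, and `q^(m)(0) = m!` makes `q`
monic.
-/

/-- The symmetric additive convolution of two polynomials of degree (at most) `m`: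
`[p ⊞_m q](x) = (1/m!) ∑_{i=0}^m p^{(i)}(x) · q^{(m-i)}(0)`. -/
noncomputable def boxplus (m : ℕ) (p q : ℝ[X]) : ℝ[X] :=
  (m.factorial : ℝ)⁻¹ •
    ∑ i ∈ Finset.range (m + 1),
      C ((Polynomial.derivative^[m - i] q).eval 0) * Polynomial.derivative^[i] p

namespace Polynomial

theorem iterate_derivative_eval_zero {R : Type*} [CommSemiring R] (q : R[X]) (k : ℕ) :
    (derivative^[k] q).eval 0 = k.factorial * q.coeff k := by
  rw [← coeff_zero_eq_eval_zero, coeff_iterate_derivative, zero_add, Nat.descFactorial_self,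
    nsmul_eq_mul]

theorem coeff_iterate_derivative_natDegree_eq_zero {R : Type*} [Semiring R] (p : R[X]) {k : ℕ}
    (hk : 0 < k) : (derivative^[k] p).coeff p.natDegree = 0 := by
  rw [coeff_iterate_derivative, coeff_eq_zero_of_natDegree_lt (by omega), smul_zero]

theorem coeff_natDegree_sum_smul_iterate_derivative {R : Type*} [Semiring R] (p : R[X])
    (c : ℕ → R) :
    (∑ i ∈ Finset.range (p.natDegree + 1), c i • derivative^[p.natDegree - i] p).coeff
      p.natDegree = c p.natDegree * p.leadingCoeff := by
  rw [finsetSum_coeff, Finset.sum_eq_single p.natDegree]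
  · rw [coeff_smul, Nat.sub_self, Function.iterate_zero_apply, smul_eq_mul, coeff_natDegree]
  · intro i hi hin
    rw [coeff_smul, coeff_iterate_derivative_natDegree_eq_zero p
      (by have := Finset.mem_range.1 hi; omega), smul_zero]
  · simp

section CharZero

variable {K : Type*} [Field K] [CharZero K]

theorem degree_iterate_derivative {p : K[X]} (hp : p ≠ 0) {k : ℕ} (hk : k ≤ p.natDegree) :
    (derivative^[k] p).degree = ↑(p.natDegree - k) := by
  refine degree_eq_of_le_of_coeff_ne_zero
    ((degree_le_natDegree).trans (by exact_mod_cast natDegree_iterate_derivative p k)) ?_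
  rw [coeff_iterate_derivative, Nat.sub_add_cancel hk, nsmul_eq_mul]
  exact mul_ne_zero (Nat.cast_ne_zero.2 (Nat.descFactorial_eq_zero_iff_lt.not.2 (by omega)))
    (leadingCoeff_ne_zero.2 hp)

noncomputable def iterateDerivativeSequence {p : K[X]} (hp : p ≠ 0) : Sequence K where
  elems' i := if i ≤ p.natDegree then derivative^[p.natDegree - i] p else X ^ i
  degree_eq' i := by
    split_ifs with hi
    · rw [degree_iterate_derivative hp (Nat.sub_le _ _), Nat.sub_sub_self hi]
    · exact degree_X_pow i

theorem exists_sum_smul_iterate_derivative_eq {p : K[X]} (hp : p ≠ 0) {g : K[X]}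
    (hg : g.natDegree ≤ p.natDegree) :
    ∃ c : ℕ → K, ∑ i ∈ Finset.range (p.natDegree + 1),
      c i • derivative^[p.natDegree - i] p = g := by
  have hspan := (iterateDerivativeSequence hp).span_degreeLT (m := p.natDegree + 1)
    fun i _ ↦ (leadingCoeff_ne_zero.2 ((iterateDerivativeSequence hp).ne_zero i)).isUnit
  have hmem : g ∈ degreeLT K (p.natDegree + 1) := by
    rw [mem_degreeLT]
    exact (degree_le_natDegree).trans_lt (by exact_mod_cast Nat.lt_succ_of_le hg)
  rw [← hspan, ← Finset.coe_range, Submodule.mem_span_image_finset_iff_exists_fun'] at hmem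
  obtain ⟨c, hc⟩ := hmem
  refine ⟨c, hc ▸ Finset.sum_congr rfl fun i hi ↦ ?_⟩
  simp [iterateDerivativeSequence, Nat.le_of_lt_succ (Finset.mem_range.1 hi)]

theorem exists_natDegree_le_iterate_derivative_eval_zero (c : ℕ → K) (m : ℕ) :
    ∃ q : K[X], q.natDegree ≤ m ∧ ∀ k ≤ m, (derivative^[k] q).eval 0 = c k := by
  refine ⟨∑ j ∈ Finset.range (m + 1), C (c j / j.factorial) * X ^ j, ?_, fun k hk ↦ ?_⟩
  · exact natDegree_sum_le_of_forall_le _ _ fun j hj ↦ (natDegree_C_mul_X_pow_le _ _).trans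
      (Nat.le_of_lt_succ (Finset.mem_range.1 hj))
  · rw [iterate_derivative_eval_zero, finsetSum_coeff, Finset.sum_eq_single k]
    · rw [coeff_C_mul_X_pow, if_pos rfl,
        mul_div_cancel₀ _ (Nat.cast_ne_zero.2 k.factorial_ne_zero)]
    · intro j _ hjk
      rw [coeff_C_mul_X_pow, if_neg (Ne.symm hjk)]
    · intro hk'
      exact absurd (Finset.mem_range.2 (Nat.lt_succ_of_le hk)) hk'

end CharZero

end Polynomial

theorem boxplus_eq_sum_smul (m : ℕ) (p q : ℝ[X]) :
    boxplus m p q = (m.factorial : ℝ)⁻¹ •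
      ∑ i ∈ Finset.range (m + 1), (derivative^[i] q).eval 0 • derivative^[m - i] p := by
  rw [boxplus, ← Finset.sum_range_reflect]
  congr 1
  refine Finset.sum_congr rfl fun i hi ↦ ?_
  have hi : i ≤ m := Nat.le_of_lt_succ (Finset.mem_range.1 hi)
  rw [smul_eq_C_mul, Nat.add_sub_cancel, Nat.sub_sub_self hi]

/-- **Invertibility of the additive convolution on degree-`m` polynomials.** For every
monic real polynomial `p` of degree `m` there is a monic real polynomial `q` of degree
`m` with `[p ⊞_m q](x) = x^m`. -/
theorem boxplus_exists_inverse (m : ℕ) (p : ℝ[X])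
    (hp : p.Monic) (hpd : p.natDegree = m) :
    ∃ q : ℝ[X], q.Monic ∧ q.natDegree = m ∧ boxplus m p q = (X : ℝ[X]) ^ m := by
  obtain ⟨c, hc⟩ := exists_sum_smul_iterate_derivative_eq hp.ne_zero (g := (m.factorial : ℝ) • X ^ m)
    (by rw [hpd]; exact (natDegree_smul_le _ _).trans (natDegree_X_pow_le m))
  have hcm : c m = m.factorial := by
    have h := coeff_natDegree_sum_smul_iterate_derivative p c
    rw [hc, hp.leadingCoeff, mul_one, hpd, coeff_smul, coeff_X_pow_self, smul_eq_mul,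
      mul_one] at h
    exact h.symm
  rw [hpd] at hc
  obtain ⟨q, hqd, hq⟩ := exists_natDegree_le_iterate_derivative_eval_zero c m
  have hqm : q.coeff m = 1 := by
    have := hq m le_rfl
    rw [iterate_derivative_eval_zero, hcm] at this
    exact (mul_eq_left₀ (by exact_mod_cast m.factorial_ne_zero)).1 this
  refine ⟨q, monic_of_natDegree_le_of_coeff_eq_one m hqd hqm,
    natDegree_eq_of_le_of_coeff_ne_zero hqd (by simp [hqm]), ?_⟩
  rw [boxplus_eq_sum_smul, Finset.sum_congr rfl fun i hi ↦ by
    rw [hq i (Nat.le_of_lt_succ (Finset.mem_range.1 hi))], hc, smul_smul,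
    inv_mul_cancel₀ (by exact_mod_cast m.factorial_ne_zero), one_smul]
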